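/- Let x, y be probability vectors and suppose there exists n ≥ 1 such that x^{⊗n} ≺ y^{⊗n}. Then there exists a finitely supported nonnegative vector z (a catalyst) such that x ⊗ z ≺ y ⊗ z; namely z = ⊕_{k=0}^{n-1} x^{⊗(n-1-k)} ⊗ y^{⊗k} works. -/
import Mathlib


open scoped BigOperators

noncomputable def kMaxSum {ι : Type*} (f : ι → ℝ) (k : ℕ) : ℝ :=
  sSup {t : ℝ | ∃ A : Finset ι, A.card = k ∧ ∑ i ∈ A, f i = t}

def Submaj {ι κ : Type*} (f : ι → ℝ) (g : κ → ℝ) : Prop :=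
  ∀ k : ℕ, kMaxSum f k ≤ kMaxSum g k

def Maj {ι κ : Type*} [Fintype ι] [Fintype κ] (f : ι → ℝ) (g : κ → ℝ) : Prop :=
  (∑ i, f i = ∑ j, g j) ∧ Submaj f g

def tensor {ι κ : Type*} (f : ι → ℝ) (g : κ → ℝ) : ι × κ → ℝ :=
  fun p => f p.1 * g p.2

/-- The `n`-fold tensor power of a vector. -/
def tpow {ι : Type*} (f : ι → ℝ) (n : ℕ) : (Fin n → ι) → ℝ :=
  fun v => ∏ j, f (v j)

section KMax
variable {ι κ : Type*} [Fintype ι] (f : ι → ℝ) (k : ℕ)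

lemma kMaxSum_set_eq :
    {t : ℝ | ∃ A : Finset ι, A.card = k ∧ ∑ i ∈ A, f i = t} =
      ↑((Finset.univ.powersetCard k).image fun A => ∑ i ∈ A, f i) := by
  ext t
  simp [Finset.mem_powersetCard_univ]

lemma sum_le_kMaxSum (A : Finset ι) (h : A.card = k) : ∑ i ∈ A, f i ≤ kMaxSum f k := by
  apply le_csSup
  · rw [kMaxSum_set_eq]
    exact ((Finset.univ.powersetCard k).image fun A => ∑ i ∈ A, f i).bddAbove
  · exact ⟨A, h, rfl⟩

lemma exists_kMaxSum (h : k ≤ Fintype.card ι) :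
    ∃ A : Finset ι, A.card = k ∧ ∑ i ∈ A, f i = kMaxSum f k := by
  obtain ⟨B, -, hB⟩ := Finset.exists_subset_card_eq (s := (Finset.univ : Finset ι)) (n := k)
    (by simpa using h)
  have hne : {t : ℝ | ∃ A : Finset ι, A.card = k ∧ ∑ i ∈ A, f i = t}.Nonempty :=
    ⟨∑ i ∈ B, f i, B, hB, rfl⟩
  have hfin : {t : ℝ | ∃ A : Finset ι, A.card = k ∧ ∑ i ∈ A, f i = t}.Finite := by
    rw [kMaxSum_set_eq]
    exact Finset.finite_toSet _
  exact hne.csSup_mem hfin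

lemma kMaxSum_of_card_lt (h : Fintype.card ι < k) : kMaxSum f k = 0 := by
  have hempty : {t : ℝ | ∃ A : Finset ι, A.card = k ∧ ∑ i ∈ A, f i = t} = ∅ := by
    ext t
    simp only [Set.mem_setOf_eq, Set.mem_empty_iff_false, iff_false, not_exists]
    rintro A ⟨hA, -⟩
    have := A.card_le_univ
    omega
  rw [kMaxSum, hempty, Real.sSup_empty]

lemma kMaxSum_comp_equiv [Fintype κ] (e : κ ≃ ι) : kMaxSum (f ∘ e) k = kMaxSum f k := by
  unfold kMaxSum
  congr 1
  ext t
  constructor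
  · rintro ⟨A, hA, rfl⟩
    refine ⟨A.map e.toEmbedding, by simp [hA], ?_⟩
    rw [Finset.sum_map]
    rfl
  · rintro ⟨A, hA, rfl⟩
    refine ⟨A.map e.symm.toEmbedding, by simp [hA], ?_⟩
    rw [Finset.sum_map]
    simp

lemma maj_comp_equiv {Q₁ Q₂ P : Type*} [Fintype Q₁] [Fintype Q₂] [Fintype P]
    {h₁ : Q₁ → ℝ} {h₂ : Q₂ → ℝ} (e₁ : P ≃ Q₁) (e₂ : P ≃ Q₂)
    (hm : Maj (h₁ ∘ e₁) (h₂ ∘ e₂)) : Maj h₁ h₂ := by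
  obtain ⟨hsum, hsub⟩ := hm
  constructor
  · rw [← e₁.sum_comp h₁, ← e₂.sum_comp h₂]
    exact hsum
  · intro k
    rw [← kMaxSum_comp_equiv h₁ k e₁, ← kMaxSum_comp_equiv h₂ k e₂]
    exact hsub k

end KMax

/-- Sum over all tuples of a product of "if" factors equals 1 when both `x` and `y`
sum to 1. -/
lemma sum_prod_ite_eq_one {d N : ℕ} (x y : Fin d → ℝ)
    (hx1 : ∑ i, x i = 1) (hy1 : ∑ i, y i = 1) (c : Fin N → Prop) [DecidablePred c] :
    ∑ v : Fin N → Fin d, ∏ j, (if c j then x (v j) else y (v j)) = 1 := by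
  have := Finset.prod_univ_sum (fun _ : Fin N => (Finset.univ : Finset (Fin d)))
    (fun j i => if c j then x i else y i)
  rw [Fintype.piFinset_univ] at this
  rw [← this]
  have : ∀ j : Fin N, (∑ i, if c j then x i else y i) = 1 := by
    intro j
    by_cases h : c j <;> simp [h, hx1, hy1]
  rw [Finset.prod_congr rfl fun j _ => this j]
  simp

section Main

variable {d : ℕ}

/-- `x^{⊗(n-t)} ⊗ y^{⊗t}` as a vector on `Fin (m+1) → Fin d`, where `n = m+1`. -/
def uu (x y : Fin d → ℝ) (m t : ℕ) : (Fin (m+1) → Fin d) → ℝ :=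
  fun v => ∏ j : Fin (m+1), (if (j : ℕ) + t < m + 1 then x (v j) else y (v j))

lemma uu_zero (x y : Fin d → ℝ) (m : ℕ) : uu x y m 0 = tpow x (m+1) := by
  funext v
  unfold uu tpow
  exact Finset.prod_congr rfl fun j _ => by rw [if_pos (by omega)]

lemma uu_top (x y : Fin d → ℝ) (m : ℕ) : uu x y m (m+1) = tpow y (m+1) := by
  funext v
  unfold uu tpow
  exact Finset.prod_congr rfl fun j _ => by rw [if_neg (by omega)]

/-- `(1/n) ⊕_k x^{⊗(n-k)} ⊗ y^{⊗k}`, `k = 0..n-1`. This is `x ⊗ z` up to relabelling. -/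
noncomputable def FF (x y : Fin d → ℝ) (m : ℕ) : Fin (m+1) × (Fin (m+1) → Fin d) → ℝ :=
  fun p => ((m : ℝ) + 1)⁻¹ * uu x y m (p.1 : ℕ) p.2

/-- `(1/n) ⊕_k x^{⊗(n-1-k)} ⊗ y^{⊗(k+1)}`, `k = 0..n-1`. This is `y ⊗ z` up to relabelling. -/
noncomputable def GG (x y : Fin d → ℝ) (m : ℕ) : Fin (m+1) × (Fin (m+1) → Fin d) → ℝ :=
  fun p => ((m : ℝ) + 1)⁻¹ * uu x y m ((p.1 : ℕ) + 1) p.2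

lemma maj_FF_GG (x y : Fin d → ℝ)
    (hx1 : ∑ i, x i = 1) (hy1 : ∑ i, y i = 1) (m : ℕ)
    (hmaj : Maj (tpow x (m+1)) (tpow y (m+1))) :
    Maj (FF x y m) (GG x y m) := by
  have hc0 : (0:ℝ) ≤ ((m : ℝ) + 1)⁻¹ := by positivity
  constructor
  · -- equal total sums: each block sums to ((m:ℝ)+1)⁻¹
    have hblock : ∀ t : ℕ, ∑ v : Fin (m+1) → Fin d, uu x y m t v = 1 := fun t =>
      sum_prod_ite_eq_one x y hx1 hy1 (fun j => (j : ℕ) + t < m + 1)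
    rw [Fintype.sum_prod_type, Fintype.sum_prod_type]
    simp only [FF, GG, ← Finset.mul_sum, hblock]
  · -- submajorization
    intro K
    by_cases hK : K ≤ Fintype.card (Fin (m+1) × (Fin (m+1) → Fin d))
    · obtain ⟨A, hAcard, hAsum⟩ := exists_kMaxSum (FF x y m) K hK
      rw [← hAsum]
      classical
      set A₀ := A.filter (fun p => p.1 = 0) with hA₀def
      set A' := A.filter (fun p => ¬ p.1 = 0) with hA'def
      set V₀ := A₀.image Prod.snd with hV₀def
      have hsplit : ∑ p ∈ A₀, FF x y m p + ∑ p ∈ A', FF x y m p = ∑ p ∈ A, FF x y m p :=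
        Finset.sum_filter_add_sum_filter_not A _ _
      have hA₀im : A₀ = V₀.image (fun v => ((0 : Fin (m+1)), v)) := by
        ext p
        simp only [hA₀def, hV₀def, Finset.mem_image, Finset.mem_filter]
        constructor
        · rintro ⟨hpA, hp0⟩
          exact ⟨p.2, ⟨p, ⟨hpA, hp0⟩, rfl⟩, by rw [← hp0]⟩
        · rintro ⟨v, ⟨r, hr, hrv⟩, rfl⟩
          have hr2 : r = ((0 : Fin (m+1)), v) := Prod.ext hr.2 hrv
          rw [← hr2]
          exact ⟨hr.1, hr.2⟩
      have hA₀sum : ∑ p ∈ A₀, FF x y m p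
          = ((m : ℝ) + 1)⁻¹ * ∑ v ∈ V₀, tpow x (m+1) v := by
        rw [hA₀im, Finset.sum_image (f := FF x y m)
          (by intro a _ b _ hab; exact ((Prod.mk.injEq _ _ _ _).mp hab).2),
          Finset.mul_sum]
        refine Finset.sum_congr rfl fun v _ => ?_
        simp [FF, uu_zero x y m]
      have hV₀card : V₀.card = A₀.card := by
        rw [hV₀def]
        apply Finset.card_image_of_injOn
        intro p hp r hr hpr
        simp only [Finset.mem_coe, hA₀def, Finset.mem_filter] at hp hr
        exact Prod.ext (hp.2.trans hr.2.symm) hpr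
      obtain ⟨B, hBcard, hBsum⟩ := exists_kMaxSum (tpow y (m+1)) V₀.card
        (by simpa using V₀.card_le_univ)
      have step1 : ∑ v ∈ V₀, tpow x (m+1) v ≤ ∑ v ∈ B, tpow y (m+1) v := by
        calc ∑ v ∈ V₀, tpow x (m+1) v ≤ kMaxSum (tpow x (m+1)) V₀.card :=
              sum_le_kMaxSum _ _ V₀ rfl
          _ ≤ kMaxSum (tpow y (m+1)) V₀.card := hmaj.2 V₀.card
          _ = ∑ v ∈ B, tpow y (m+1) v := hBsum.symm
      -- candidate set for G
      set φ : Fin (m+1) × (Fin (m+1) → Fin d) → Fin (m+1) × (Fin (m+1) → Fin d) :=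
        fun p => (p.1 - 1, p.2) with hφdef
      set C := A'.image φ ∪ B.image (fun v => (Fin.last m, v)) with hCdef
      have hφinj : Function.Injective φ := by
        intro p r hpr
        rw [hφdef] at hpr
        have h1 : p.1 - 1 = r.1 - 1 := ((Prod.mk.injEq _ _ _ _).mp hpr).1
        have h2 : p.2 = r.2 := ((Prod.mk.injEq _ _ _ _).mp hpr).2
        exact Prod.ext (sub_left_inj.mp h1) h2
      have hlastinj : Function.Injective (fun v : Fin (m+1) → Fin d => (Fin.last m, v)) := by
        intro a b hab
        exact ((Prod.mk.injEq _ _ _ _).mp hab).2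
      have hmemA' : ∀ p ∈ A', ¬ p.1 = 0 := by
        intro p hp
        rw [hA'def, Finset.mem_filter] at hp
        exact hp.2
      have hdisj : Disjoint (A'.image φ) (B.image (fun v => (Fin.last m, v))) := by
        rw [Finset.disjoint_left]
        rintro r hr1 hr2
        rw [Finset.mem_image] at hr1 hr2
        obtain ⟨p, hp, rfl⟩ := hr1
        obtain ⟨v, hv, hlv⟩ := hr2
        have hp0 : ¬ p.1 = 0 := hmemA' p hp
        have h1 : ((Fin.last m : Fin (m+1)) : ℕ) = ((p.1 - 1 : Fin (m+1)) : ℕ) := by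
          rw [((Prod.mk.injEq _ _ _ _).mp hlv).1]
        rw [Fin.coe_sub_one, if_neg hp0, Fin.val_last] at h1
        have hple : (p.1 : ℕ) ≤ m := Nat.lt_succ_iff.mp p.1.isLt
        have hppos : (p.1 : ℕ) ≠ 0 := fun hz => hp0 (Fin.ext hz)
        omega
      have hCcard : C.card = K := by
        rw [hCdef, Finset.card_union_of_disjoint hdisj,
          Finset.card_image_of_injective _ hφinj, Finset.card_image_of_injective _ hlastinj,
          hBcard, hV₀card]
        rw [← hAcard, hA₀def, hA'def]
        have := Finset.card_filter_add_card_filter_not (s := A)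
          (p := fun p : Fin (m+1) × (Fin (m+1) → Fin d) => p.1 = 0)
        omega
      have hGφ : ∀ p ∈ A', GG x y m (φ p) = FF x y m p := by
        intro p hp
        have hp0 : ¬ p.1 = 0 := hmemA' p hp
        have hppos : (p.1 : ℕ) ≠ 0 := fun hz => hp0 (Fin.ext hz)
        simp only [GG, FF, hφdef]
        congr 2
        rw [Fin.coe_sub_one, if_neg hp0]
        omega
      have hGlast : ∀ v, GG x y m (Fin.last m, v) = ((m : ℝ) + 1)⁻¹ * tpow y (m+1) v := by
        intro v
        simp only [GG, Fin.val_last]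
        rw [uu_top x y m]
      have hCsum : ∑ r ∈ C, GG x y m r
          = ∑ p ∈ A', FF x y m p + ((m : ℝ) + 1)⁻¹ * ∑ v ∈ B, tpow y (m+1) v := by
        rw [hCdef, Finset.sum_union hdisj,
          Finset.sum_image (fun a _ b _ hab => hφinj hab),
          Finset.sum_image (fun a _ b _ hab => hlastinj hab)]
        rw [Finset.sum_congr rfl hGφ, Finset.sum_congr rfl fun v _ => hGlast v,
          ← Finset.mul_sum]
      calc ∑ p ∈ A, FF x y m p
          = ((m : ℝ) + 1)⁻¹ * ∑ v ∈ V₀, tpow x (m+1) v + ∑ p ∈ A', FF x y m p := by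
            rw [← hsplit, hA₀sum]
        _ ≤ ((m : ℝ) + 1)⁻¹ * ∑ v ∈ B, tpow y (m+1) v + ∑ p ∈ A', FF x y m p := by
            gcongr
        _ = ∑ r ∈ C, GG x y m r := by rw [hCsum]; ring
        _ ≤ kMaxSum (GG x y m) K := sum_le_kMaxSum _ _ C hCcard
    · push_neg at hK
      rw [kMaxSum_of_card_lt _ _ hK, kMaxSum_of_card_lt _ _ hK]

end Main

section Assemble

variable {d : ℕ}

/-- Relabelling `(k, v) ↦ (v 0, (k, tail v))`, with the catalyst index flattened by `q`. -/
def exEquiv (d m K : ℕ) (q : (Fin (m+1) × (Fin m → Fin d)) ≃ Fin K) :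
    (Fin (m+1) × (Fin (m+1) → Fin d)) ≃ (Fin d × Fin K) where
  toFun p := (p.2 0, q (p.1, Fin.tail p.2))
  invFun r := ((q.symm r.2).1, Fin.cons r.1 (q.symm r.2).2)
  left_inv := by
    rintro ⟨k, v⟩
    simp [Fin.cons_self_tail]
  right_inv := by
    rintro ⟨i, s⟩
    simp

/-- Relabelling `(k, v) ↦ (v last, (k, init v))`, with the catalyst index flattened by `q`. -/
def eyEquiv (d m K : ℕ) (q : (Fin (m+1) × (Fin m → Fin d)) ≃ Fin K) :
    (Fin (m+1) × (Fin (m+1) → Fin d)) ≃ (Fin d × Fin K) where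
  toFun p := (p.2 (Fin.last m), q (p.1, Fin.init p.2))
  invFun r := ((q.symm r.2).1, Fin.snoc (q.symm r.2).2 r.1)
  left_inv := by
    rintro ⟨k, v⟩
    simp [Fin.snoc_init_self]
  right_inv := by
    rintro ⟨i, s⟩
    simp

lemma tensor_block_x (x y : Fin d → ℝ) (m : ℕ) (k : Fin (m+1)) (v : Fin (m+1) → Fin d) :
    x (v 0) * ∏ j : Fin m,
        (if (j : ℕ) + (k : ℕ) < m then x (Fin.tail v j) else y (Fin.tail v j))
      = uu x y m (k : ℕ) v := by
  unfold uu
  rw [Fin.prod_univ_succ]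
  congr 1
  · rw [if_pos]
    simp only [Fin.val_zero]
    omega
  · refine Finset.prod_congr rfl fun j _ => ?_
    simp only [Fin.tail, Fin.val_succ]
    exact if_congr (by omega) rfl rfl

lemma tensor_block_y (x y : Fin d → ℝ) (m : ℕ) (k : Fin (m+1)) (v : Fin (m+1) → Fin d) :
    y (v (Fin.last m)) * ∏ j : Fin m,
        (if (j : ℕ) + (k : ℕ) < m then x (Fin.init v j) else y (Fin.init v j))
      = uu x y m ((k : ℕ) + 1) v := by
  unfold uu
  rw [Fin.prod_univ_castSucc]
  rw [mul_comm]
  congr 1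
  · refine Finset.prod_congr rfl fun j _ => ?_
    simp only [Fin.init, Fin.coe_castSucc]
    exact if_congr (by omega) rfl rfl
  · rw [if_neg]
    simp only [Fin.val_last]
    omega

end Assemble

/-- MLOCC implies ELOCC: if `x^{⊗n} ≺ y^{⊗n}` for some `n ≥ 1`, then there is a
finitely supported catalyst `z` with `x ⊗ z ≺ y ⊗ z`. -/
theorem catalysis_of_multicopy {d : ℕ} (x y : Fin d → ℝ)
    (hx0 : ∀ i, 0 ≤ x i) (hx1 : ∑ i, x i = 1)
    (hy0 : ∀ i, 0 ≤ y i) (hy1 : ∑ i, y i = 1)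
    (h : ∃ n : ℕ, 1 ≤ n ∧ Maj (tpow x n) (tpow y n)) :
    ∃ (k : ℕ) (z : Fin k → ℝ), (∀ i, 0 ≤ z i) ∧ ∑ i, z i = 1 ∧
      Maj (tensor x z) (tensor y z) := by
  classical
  obtain ⟨n, hn1, hmaj⟩ := h
  obtain ⟨m, rfl⟩ : ∃ m, n = m + 1 := ⟨n - 1, by omega⟩
  have hc0 : (0:ℝ) ≤ ((m : ℝ) + 1)⁻¹ := by positivity
  set z₀ : Fin (m+1) × (Fin m → Fin d) → ℝ :=
    fun p => ((m : ℝ) + 1)⁻¹ *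
      ∏ j : Fin m, (if (j : ℕ) + (p.1 : ℕ) < m then x (p.2 j) else y (p.2 j)) with hz₀
  set q := Fintype.equivFin (Fin (m+1) × (Fin m → Fin d)) with hq
  refine ⟨_, z₀ ∘ q.symm, ?_, ?_, ?_⟩
  · -- nonnegativity
    intro i
    simp only [Function.comp_apply, hz₀]
    apply mul_nonneg hc0
    apply Finset.prod_nonneg
    intro j _
    split
    · exact hx0 _
    · exact hy0 _
  · -- sums to one
    have hcomp : ∑ i, (z₀ ∘ q.symm) i = ∑ p, z₀ p := Equiv.sum_comp q.symm z₀
    rw [hcomp, Fintype.sum_prod_type]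
    have hblock : ∀ k : Fin (m+1), ∑ w : Fin m → Fin d, z₀ (k, w) = ((m : ℝ) + 1)⁻¹ := by
      intro k
      simp only [hz₀]
      rw [← Finset.mul_sum,
        sum_prod_ite_eq_one x y hx1 hy1 (fun j : Fin m => (j : ℕ) + (k : ℕ) < m), mul_one]
    rw [Finset.sum_congr rfl fun k _ => hblock k]
    simp only [Finset.sum_const, Finset.card_univ, Fintype.card_fin, nsmul_eq_mul]
    have : ((m : ℝ) + 1) ≠ 0 := by positivity
    push_cast
    field_simp
  · -- majorization
    apply maj_comp_equiv (exEquiv d m _ q) (eyEquiv d m _ q)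
    have h1 : tensor x (z₀ ∘ q.symm) ∘ (exEquiv d m _ q) = FF x y m := by
      funext p
      obtain ⟨k, v⟩ := p
      simp only [Function.comp_apply, exEquiv, Equiv.coe_fn_mk, tensor,
        Equiv.symm_apply_apply, hz₀, FF]
      rw [← tensor_block_x x y m k v]
      ring
    have h2 : tensor y (z₀ ∘ q.symm) ∘ (eyEquiv d m _ q) = GG x y m := by
      funext p
      obtain ⟨k, v⟩ := p
      simp only [Function.comp_apply, eyEquiv, Equiv.coe_fn_mk, tensor,
        Equiv.symm_apply_apply, hz₀, GG]
      rw [← tensor_block_y x y m k v]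
      ring
    rw [h1, h2]
    exact maj_FF_GG x y hx1 hy1 m hmaj
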